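/- Let ρ be a density matrix on ℂ^d ⊗ ℂ^d and let |φ⟩ = μ_0 |a_0⟩⊗|b_0⟩ + μ_1 |a_1⟩⊗|b_1⟩ be a normalized Schmidt rank 2 vector (μ_0 ≥ μ_1 > 0, μ_0² + μ_1² = 1, orthonormal pairs). Define P_A = |a_0⟩⟨a_0| + |a_1⟩⟨a_1|, P_B = |b_0*⟩⟨b_0*| + |b_1*⟩⟨b_1*|, and suppose q := Tr((P_A ⊗ P_B) ρ) > 0, and set σ = q^{−1} (P_A ⊗ P_B) ρ (P_A ⊗ P_B). Then ⟨φ| σ^Γ |φ⟩ = q^{−1} ⟨φ| ρ^Γ |φ⟩; in particular if ⟨φ| ρ^Γ |φ⟩ < 0 then the smallest eigenvalue of σ^Γ satisfies λ_min(σ^Γ) ≤ q^{−1} ⟨φ| ρ^Γ |φ⟩ < 0. -/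
import Mathlib


open Matrix BigOperators Complex Kronecker
open scoped ComplexOrder

/-- Partial transpose on the second tensor factor:
`(ρ^Γ)_{(i,j),(k,l)} = ρ_{(i,l),(k,j)}`. -/
def PT {d : ℕ} (ρ : Matrix (ZMod d × ZMod d) (ZMod d × ZMod d) ℂ) :
    Matrix (ZMod d × ZMod d) (ZMod d × ZMod d) ℂ :=
  Matrix.of fun p q => ρ (p.1, q.2) (q.1, p.2)

/-- Rank-2 projector `|v₀⟩⟨v₀| + |v₁⟩⟨v₁|`. -/
def projPair {d : ℕ} (v : Fin 2 → ZMod d → ℂ) : Matrix (ZMod d) (ZMod d) ℂ :=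
  Matrix.of fun i j => v 0 i * (starRingEnd ℂ) (v 0 j) + v 1 i * (starRingEnd ℂ) (v 1 j)

lemma sum3 {α : Type*} [Fintype α] (f : α → α → α → ℂ) :
    ∑ r, ∑ m, ∑ n, f r m n = ∑ n, ∑ m, ∑ r, f r m n := by
  rw [Finset.sum_comm]
  exact Eq.trans (Finset.sum_congr rfl fun m _ => Finset.sum_comm) Finset.sum_comm

section aux
set_option linter.unusedSectionVars false
variable {d : ℕ} [NeZero d]

lemma PT_sandwich (A B C D : Matrix (ZMod d) (ZMod d) ℂ)
    (ρ : Matrix (ZMod d × ZMod d) (ZMod d × ZMod d) ℂ) :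
    PT ((A ⊗ₖ B) * ρ * (C ⊗ₖ D)) = (A ⊗ₖ Dᵀ) * PT ρ * (C ⊗ₖ Bᵀ) := by
  ext ⟨i,j⟩ ⟨k,l⟩
  simp only [PT, Matrix.of_apply, Matrix.mul_apply, kroneckerMap_apply, Fintype.sum_prod_type,
    Finset.sum_mul, Finset.mul_sum, transpose_apply]
  refine Finset.sum_congr rfl fun p _ => ?_
  rw [sum3]
  exact Finset.sum_congr rfl fun n _ => Finset.sum_congr rfl fun m _ =>
    Finset.sum_congr rfl fun r _ => by ring

lemma projPair_mulVec (v : Fin 2 → ZMod d → ℂ)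
    (h : ∀ i j, star (v i) ⬝ᵥ v j = if i = j then 1 else 0) (t : Fin 2) :
    projPair v *ᵥ v t = v t := by
  have h0 := h 0 t; have h1 := h 1 t
  simp only [dotProduct, Pi.star_apply, RCLike.star_def] at h0 h1
  funext j
  simp only [projPair, mulVec, dotProduct, Matrix.of_apply, add_mul, Finset.sum_add_distrib,
    mul_assoc, ← Finset.mul_sum, h0, h1]
  fin_cases t <;> simp

lemma projPair_herm (v : Fin 2 → ZMod d → ℂ) : (projPair v)ᴴ = projPair v := by
  ext i j
  simp [projPair, conjTranspose_apply, mul_comm]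

lemma kron_conjTranspose (A Q : Matrix (ZMod d) (ZMod d) ℂ) :
    (A ⊗ₖ Q)ᴴ = Aᴴ ⊗ₖ Qᴴ := by
  ext ⟨i,j⟩ ⟨k,l⟩
  simp [conjTranspose_apply, kroneckerMap_apply, star_mul', mul_comm]

lemma kron_mulVec (A Q : Matrix (ZMod d) (ZMod d) ℂ) (u v : ZMod d → ℂ) :
    (A ⊗ₖ Q) *ᵥ (fun p : ZMod d × ZMod d => u p.1 * v p.2)
      = fun p => (A *ᵥ u) p.1 * (Q *ᵥ v) p.2 := by
  funext ⟨i,j⟩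
  simp only [mulVec, dotProduct, kroneckerMap_apply, Fintype.sum_prod_type, Finset.sum_mul_sum]
  exact Finset.sum_congr rfl fun k _ => Finset.sum_congr rfl fun l _ => by ring

lemma dot_kron (u v u' v' : ZMod d → ℂ) :
    star (fun p : ZMod d × ZMod d => u p.1 * v p.2) ⬝ᵥ (fun p => u' p.1 * v' p.2)
      = (star u ⬝ᵥ u') * (star v ⬝ᵥ v') := by
  simp only [dotProduct, Pi.star_apply, Fintype.sum_prod_type, Finset.sum_mul_sum]
  exact Finset.sum_congr rfl fun k _ => Finset.sum_congr rfl fun l _ => by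
    simp [star_mul']; ring

end aux

lemma rayleigh_lower {n : Type*} [Fintype n] [Nonempty n] [DecidableEq n]
    (M : Matrix n n ℂ) (hM : M.IsHermitian) (φ : n → ℂ) (hφ1 : star φ ⬝ᵥ φ = 1)
    (c : ℝ) (hc : star φ ⬝ᵥ (M *ᵥ φ) = (c : ℂ)) :
    (⨅ i, hM.eigenvalues i) ≤ c := by
  set U : Matrix n n ℂ := (hM.eigenvectorUnitary : Matrix n n ℂ) with hU
  set ψ : n → ℂ := star U *ᵥ φ with hψ
  have hdot : ∀ (w : n → ℂ), star φ ⬝ᵥ (U *ᵥ w) = star ψ ⬝ᵥ w := by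
    intro w
    rw [dotProduct_mulVec]
    congr 1
    rw [hψ, star_mulVec, star_eq_conjTranspose, conjTranspose_conjTranspose]
  set lam := hM.eigenvalues with hlam
  have hUU : U * star U = 1 := (Matrix.mem_unitaryGroup_iff).mp hM.eigenvectorUnitary.2
  have hUψ : U *ᵥ ψ = φ := by rw [hψ, mulVec_mulVec, hUU, one_mulVec]
  have hDv : (diagonal (RCLike.ofReal ∘ lam) : Matrix n n ℂ) *ᵥ ψ
      = fun i => (lam i : ℂ) * ψ i := by
    funext i; simp [mulVec_diagonal]
  have hMψ : M *ᵥ φ = U *ᵥ fun i => (lam i : ℂ) * ψ i := by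
    conv_lhs => rw [show M = U * diagonal (RCLike.ofReal ∘ lam) * star U from hM.spectral_theorem]
    rw [← mulVec_mulVec, ← mulVec_mulVec, ← hψ, hDv]
  have hc2 : (∑ i, ((lam i : ℂ) * Complex.normSq (ψ i))) = (c : ℂ) := by
    rw [← hc, hMψ, hdot]
    simp only [dotProduct, Pi.star_apply]
    refine Finset.sum_congr rfl fun i _ => ?_
    rw [mul_left_comm, RCLike.star_def, ← Complex.normSq_eq_conj_mul_self]
  have h1 : (∑ i, (Complex.normSq (ψ i) : ℂ)) = 1 := by
    have e : star ψ ⬝ᵥ ψ = 1 := by rw [← hdot ψ, hUψ, hφ1]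
    rw [← e]
    simp only [dotProduct, Pi.star_apply]
    exact Finset.sum_congr rfl fun i _ => by
      rw [RCLike.star_def]; exact Complex.normSq_eq_conj_mul_self
  have hc3 : (∑ i, lam i * Complex.normSq (ψ i)) = c := by
    have := hc2; push_cast at this; exact_mod_cast this
  have h2 : (∑ i, Complex.normSq (ψ i)) = 1 := by exact_mod_cast h1
  have hinf : ∀ i, (⨅ j, lam j) ≤ lam i := fun i => ciInf_le (Finite.bddBelow_range _) i
  calc (⨅ j, lam j) = (⨅ j, lam j) * ∑ i, Complex.normSq (ψ i) := by rw [h2, mul_one]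
    _ = ∑ i, (⨅ j, lam j) * Complex.normSq (ψ i) := by rw [Finset.mul_sum]
    _ ≤ ∑ i, lam i * Complex.normSq (ψ i) :=
        Finset.sum_le_sum fun i _ => mul_le_mul_of_nonneg_right (hinf i) (Complex.normSq_nonneg _)
    _ = c := hc3

/-- Filtering: with `P_A`, `P_B` built from the Schmidt data of `φ`,
`q = Tr((P_A ⊗ P_B)ρ) > 0` and `σ = q⁻¹ (P_A ⊗ P_B) ρ (P_A ⊗ P_B)`, one has
`⟨φ|σ^Γ|φ⟩ = q⁻¹ ⟨φ|ρ^Γ|φ⟩`; in particular if `⟨φ|ρ^Γ|φ⟩ = r < 0` then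
`λ_min(σ^Γ) ≤ q⁻¹ r < 0`. -/
theorem stmt11 (d : ℕ) [NeZero d]
    (ρ : Matrix (ZMod d × ZMod d) (ZMod d × ZMod d) ℂ)
    (hρ : ρ.PosSemidef) (htr : ρ.trace = 1)
    (μ₀ μ₁ : ℝ) (a b : Fin 2 → ZMod d → ℂ)
    (hμ : μ₁ ≤ μ₀) (hμ1 : 0 < μ₁) (hnorm : μ₀ ^ 2 + μ₁ ^ 2 = 1)
    (ha : ∀ i j, star (a i) ⬝ᵥ a j = if i = j then 1 else 0)
    (hb : ∀ i j, star (b i) ⬝ᵥ b j = if i = j then 1 else 0)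
    (φ : ZMod d × ZMod d → ℂ)
    (hφ : φ = fun p => (μ₀ : ℂ) * a 0 p.1 * b 0 p.2 + (μ₁ : ℂ) * a 1 p.1 * b 1 p.2)
    (q : ℝ)
    (hq : ((projPair a ⊗ₖ projPair fun k i => (starRingEnd ℂ) (b k i)) * ρ).trace = (q : ℂ))
    (hqpos : 0 < q)
    (σ : Matrix (ZMod d × ZMod d) (ZMod d × ZMod d) ℂ)
    (hσ : σ = ((q⁻¹ : ℝ) : ℂ) •
      ((projPair a ⊗ₖ projPair fun k i => (starRingEnd ℂ) (b k i)) * ρ *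
        (projPair a ⊗ₖ projPair fun k i => (starRingEnd ℂ) (b k i))))
    (hHσ : (PT σ).IsHermitian) :
    star φ ⬝ᵥ (PT σ *ᵥ φ) = ((q⁻¹ : ℝ) : ℂ) * (star φ ⬝ᵥ (PT ρ *ᵥ φ)) ∧
    ∀ r : ℝ, star φ ⬝ᵥ (PT ρ *ᵥ φ) = (r : ℂ) → r < 0 →
      (⨅ i, hHσ.eigenvalues i) ≤ q⁻¹ * r ∧ q⁻¹ * r < 0 := by
  set A := projPair a with hA
  set B := (projPair fun k i => (starRingEnd ℂ) (b k i)) with hB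
  set Q := projPair b with hQ
  have hBT : Bᵀ = Q := by
    ext i j
    simp [hB, hQ, projPair, transpose_apply, mul_comm]
  have hPTσ : PT σ = ((q⁻¹ : ℝ) : ℂ) • ((A ⊗ₖ Q) * PT ρ * (A ⊗ₖ Q)) := by
    rw [hσ]
    have h1 : PT (((q⁻¹ : ℝ) : ℂ) • ((A ⊗ₖ B) * ρ * (A ⊗ₖ B)))
        = ((q⁻¹ : ℝ) : ℂ) • PT ((A ⊗ₖ B) * ρ * (A ⊗ₖ B)) := rfl
    rw [h1, PT_sandwich, hBT]
  have hφ' : φ = (μ₀ : ℂ) • (fun p : ZMod d × ZMod d => a 0 p.1 * b 0 p.2)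
      + (μ₁ : ℂ) • (fun p => a 1 p.1 * b 1 p.2) := by
    funext p; simp [hφ]; ring
  have hfix : (A ⊗ₖ Q) *ᵥ φ = φ := by
    rw [hφ', mulVec_add, mulVec_smul, mulVec_smul, kron_mulVec, kron_mulVec,
      projPair_mulVec a ha 0, projPair_mulVec a ha 1,
      projPair_mulVec b hb 0, projPair_mulVec b hb 1]
  have hherm : (A ⊗ₖ Q)ᴴ = A ⊗ₖ Q := by
    rw [kron_conjTranspose, hA, hQ, projPair_herm, projPair_herm]
  have hstar : star φ ᵥ* (A ⊗ₖ Q) = star φ := by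
    have h2 := congrArg star hfix
    rwa [star_mulVec, hherm] at h2
  have hquad : ∀ M : Matrix (ZMod d × ZMod d) (ZMod d × ZMod d) ℂ,
      star φ ⬝ᵥ (((A ⊗ₖ Q) * M * (A ⊗ₖ Q)) *ᵥ φ) = star φ ⬝ᵥ (M *ᵥ φ) := by
    intro M
    rw [← mulVec_mulVec, ← mulVec_mulVec, hfix, dotProduct_mulVec, hstar]
  have conc1 : star φ ⬝ᵥ (PT σ *ᵥ φ) = ((q⁻¹ : ℝ) : ℂ) * (star φ ⬝ᵥ (PT ρ *ᵥ φ)) := by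
    rw [hPTσ, smul_mulVec, dotProduct_smul, hquad, smul_eq_mul]
  have hφφ : star φ ⬝ᵥ φ = 1 := by
    have e : ∀ s t : Fin 2,
        star (fun p : ZMod d × ZMod d => a s p.1 * b s p.2) ⬝ᵥ (fun p => a t p.1 * b t p.2)
          = if s = t then 1 else 0 := by
      intro s t
      rw [dot_kron, ha, hb]
      by_cases h : s = t <;> simp [h]
    rw [hφ', star_add, star_smul, star_smul, add_dotProduct, smul_dotProduct, smul_dotProduct,
      dotProduct_add, dotProduct_add, dotProduct_smul, dotProduct_smul, dotProduct_smul,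
      dotProduct_smul, e 0 0, e 0 1, e 1 0, e 1 1]
    have h3 : ((μ₀ : ℂ) ^ 2 + (μ₁ : ℂ) ^ 2) = 1 := by exact_mod_cast congrArg Complex.ofReal hnorm
    simp only [if_true, one_ne_zero, reduceIte, smul_eq_mul, mul_one, mul_zero,
      add_zero, zero_add, Complex.star_def, Complex.conj_ofReal]
    rw [if_neg (by decide : ¬(0:Fin 2) = 1)]
    linear_combination h3
  refine ⟨conc1, fun r hr hrneg => ?_⟩
  have hσφ : star φ ⬝ᵥ (PT σ *ᵥ φ) = ((q⁻¹ * r : ℝ) : ℂ) := by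
    rw [conc1, hr]; push_cast; ring
  exact ⟨rayleigh_lower _ hHσ φ hφφ _ hσφ,
    mul_neg_of_pos_of_neg (inv_pos.mpr hqpos) hrneg⟩
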